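/- arXiv:1411.6739 — 2 statements merged into one kernel-verified Lean document; each statement's English description precedes it below -/
import Mathlib

section
/- Let R be upper triangular with R*R = T·I − s s*, s having unit-modulus entries, and suppose |R_{i,i}|² = T − T/(T−(i−1)) for all i. Then for any unit-modulus sequence s̃ ≠ s whose largest differing index i satisfies i ≤ T−1, the partial metric M_{s̃,i} = ∑_{j=i}^{T} |∑_{k=j}^{T} R_{j,k} s̃_k|² is strictly positive. -/
/-!
Since `|s_k| = 1`, the vector `s` lies in the kernel of `T·I − s s* = Rᴴ R`, hence `R s = 0`.
As `R` is upper triangular and `s̃` agrees with `s` beyond index `i`, the `i`-th entry of `R s̃`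
is `R_{i,i} (s̃_i − s_i)`, and `R_{i,i} ≠ 0` because `T − T/(T − i)` is positive once `i ≤ T − 2`
(zero-based). That entry alone makes the partial metric positive.
-/

open Matrix

namespace Matrix

variable {n α : Type*} [Fintype n]

section RCLike

open scoped ComplexOrder

variable {m 𝕜 : Type*} [RCLike 𝕜]

theorem star_dotProduct_self_eq_card {s : n → 𝕜} (hs : ∀ k, ‖s k‖ = 1) :
    star s ⬝ᵥ s = Fintype.card n := by
  simp [dotProduct, RCLike.conj_mul, hs]

theorem mulVec_eq_zero_of_conjTranspose_mul_self_eq [Fintype m] [DecidableEq n]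
    {A : Matrix m n 𝕜} {s : n → 𝕜}
    (hA : Aᴴ * A = (star s ⬝ᵥ s) • (1 : Matrix n n 𝕜) - vecMulVec s (star s)) : A *ᵥ s = 0 := by
  rw [← conjTranspose_mul_self_mulVec_eq_zero, hA, sub_mulVec, smul_mulVec, one_mulVec,
    vecMulVec_mulVec, op_smul_eq_smul, sub_self]

end RCLike

theorem BlockTriangular.mulVec_apply_eq_sum_Ici [LinearOrder n] [LocallyFiniteOrderTop n]
    [NonUnitalNonAssocSemiring α] {M : Matrix n n α} (hM : M.BlockTriangular id) (x : n → α)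
    (j : n) : (M *ᵥ x) j = ∑ k ∈ Finset.Ici j, M j k * x k := by
  refine (Finset.sum_subset (Finset.subset_univ _) fun k _ hk => ?_).symm
  exact mul_eq_zero_of_left (hM (by simpa using hk)) _

theorem BlockTriangular.mulVec_apply_of_eq_above [LinearOrder n] [NonUnitalNonAssocRing α]
    {M : Matrix n n α} (hM : M.BlockTriangular id) {s x : n → α} (hs : M *ᵥ s = 0) {i : n}
    (hx : ∀ k, i < k → x k = s k) : (M *ᵥ x) i = M i i * (x i - s i) := by
  rw [show M *ᵥ x = M *ᵥ (x - s) by rw [mulVec_sub, hs, sub_zero]]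
  refine Finset.sum_eq_single i (fun k _ hki => ?_) (by simp)
  rcases lt_or_gt_of_ne hki with hk | hk
  · exact mul_eq_zero_of_left (hM hk) _
  · exact mul_eq_zero_of_right _ (sub_eq_zero.2 (hx k hk))

end Matrix

theorem stmt7_general (T : ℕ) (s stil : Fin T → ℂ)
    (hs : ∀ k, ‖s k‖ = 1)
    (R : Matrix (Fin T) (Fin T) ℂ)
    (hupper : ∀ i j : Fin T, j < i → R i j = 0)
    (hR : Rᴴ * R = (T : ℂ) • (1 : Matrix (Fin T) (Fin T) ℂ) - vecMulVec s (star s))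
    (hdiag : ∀ i : Fin T, ‖R i i‖ ^ 2 = (T : ℝ) - (T : ℝ) / ((T : ℝ) - (i : ℕ)))
    (i : Fin T) (hi : stil i ≠ s i) (hmax : ∀ k : Fin T, i < k → stil k = s k)
    (hiT : (i : ℕ) + 1 ≤ T - 1) :
    0 < ∑ j ∈ Finset.Ici i, ‖∑ k ∈ Finset.Ici j, R j k * stil k‖ ^ 2 := by
  have hRupper : R.BlockTriangular id := fun j k => hupper j k
  have hRs : R *ᵥ s = 0 := by
    have hss : star s ⬝ᵥ s = T := by simpa using star_dotProduct_self_eq_card hs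
    exact mulVec_eq_zero_of_conjTranspose_mul_self_eq (hss ▸ hR)
  have hrow : ∑ k ∈ Finset.Ici i, R i k * stil k = R i i * (stil i - s i) := by
    rw [← hRupper.mulVec_apply_eq_sum_Ici]
    exact hRupper.mulVec_apply_of_eq_above hRs hmax
  have hRii : 0 < ‖R i i‖ ^ 2 := by
    have hTi : 1 < (T : ℝ) - (i : ℕ) := by
      rw [lt_sub_iff_add_lt']
      exact_mod_cast (by omega : (i : ℕ) + 1 < T)
    rw [hdiag]
    exact sub_pos.2 (div_lt_self (by linarith) hTi)
  refine Finset.sum_pos' (fun j _ => by positivity) ⟨i, Finset.mem_Ici.2 le_rfl, ?_⟩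
  rw [hrow, norm_mul, mul_pow]
  exact mul_pos hRii (pow_pos (norm_pos_iff.2 (sub_ne_zero.2 hi)) 2)

/-- If the diagonal of the Cholesky factor `R` of `T·I − s s*` satisfies
`|R_{i,i}|² = T − T/(T−(i−1))` (with `i` one-based, so `i − 1` is the `Fin`
value), then for any unit-modulus `s̃ ≠ s` whose largest differing index `i`
satisfies `i ≤ T−1`, the partial metric `∑_{j=i}^{T} |∑_{k=j}^{T} R_{j,k} s̃_k|²`
is strictly positive. -/
theorem stmt7 (T : ℕ) (hT : 2 ≤ T) (s stil : Fin T → ℂ)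
    (hs : ∀ k, ‖s k‖ = 1)
    (hstil : ∀ k, ‖stil k‖ = 1)
    (R : Matrix (Fin T) (Fin T) ℂ)
    (hupper : ∀ i j : Fin T, j < i → R i j = 0)
    (hR : Rᴴ * R = (T : ℂ) • (1 : Matrix (Fin T) (Fin T) ℂ) - vecMulVec s (star s))
    (hdiag : ∀ i : Fin T, ‖R i i‖ ^ 2 = (T : ℝ) - (T : ℝ) / ((T : ℝ) - (i : ℕ)))
    (i : Fin T) (hi : stil i ≠ s i) (hmax : ∀ k : Fin T, i < k → stil k = s k)
    (hiT : (i : ℕ) + 1 ≤ T - 1) :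
    0 < ∑ j ∈ Finset.Ici i, ‖∑ k ∈ Finset.Ici j, R j k * stil k‖ ^ 2 :=
  stmt7_general T s stil hs R hupper hR hdiag i hi hmax hiT
end

section
/- For a fixed unit-modulus transmitted sequence s ∈ Ω^T and any sequence s̃ ∈ Ω^T not a scalar-phase equal to s (here with last symbol fixed, s̃ ≠ s), the quadratic form s̃*(ρ_E I − E[X*X]/N)s̃ = T² − |s̃*s|² is strictly positive, where ρ_E = T + σ². -/
/-!
Expanding, the form is `T · (s̃* s̃) - |s̃* s|² = T² - |s̃* s|²`. The numbers `conj s̃ₖ · sₖ` lie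
on the unit circle; at the reference index it is `1`, at an index where `s̃` and `s` differ it is
not, so by strict convexity of `ℂ` their mean lies strictly inside the unit disc: `|s̃* s| < T`.
-/

open Matrix

theorem norm_sum_lt_card_of_norm_le_one {E ι : Type*} [NormedAddCommGroup E] [NormedSpace ℝ E]
    [StrictConvexSpace ℝ E] [Fintype ι] {z : ι → E} (hz : ∀ k, ‖z k‖ ≤ 1) {i j : ι}
    (hij : z i ≠ z j) : ‖∑ k, z k‖ < Fintype.card ι := by
  have hcard : (0 : ℝ) < Fintype.card ι := Nat.cast_pos.2 (Fintype.card_pos_iff.2 ⟨i⟩)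
  have hw : (Fintype.card ι : ℝ)⁻¹ ≠ 0 := inv_ne_zero hcard.ne'
  have hmean := norm_sum_lt_of_strictConvexSpace (w := fun _ => (Fintype.card ι : ℝ)⁻¹)
    (fun _ _ => inv_nonneg.2 hcard.le) (by simp [hcard.ne']) (Finset.mem_univ i)
    (Finset.mem_univ j) hij hw hw (fun k _ => hz k)
  rw [← Finset.smul_sum, norm_smul, Real.norm_of_nonneg (inv_nonneg.2 hcard.le),
    inv_mul_lt_iff₀ hcard, mul_one] at hmean
  exact hmean

section

variable {𝕜 n : Type*} [RCLike 𝕜] [Fintype n]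

theorem star_dotProduct_self_of_norm_eq_one {v : n → 𝕜} (hv : ∀ k, ‖v k‖ = 1) :
    star v ⬝ᵥ v = Fintype.card n := by
  simp [dotProduct, RCLike.conj_mul, hv]

theorem star_dotProduct_vecMulVec_mulVec (u v : n → 𝕜) :
    star v ⬝ᵥ (vecMulVec u (star u) *ᵥ v) = (‖star v ⬝ᵥ u‖ ^ 2 : ℝ) := by
  rw [vecMulVec_mulVec, dotProduct_smul, star_dotProduct u, op_smul_eq_mul]
  push_cast
  exact RCLike.mul_conj _

end

/-- For unit-modulus `s, s̃` with the phase reference fixed (`s̃_T = s_T`) and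
`s̃ ≠ s`, the quadratic form `s̃*(ρ_E I − E[X*X]/N) s̃ = s̃*(T·I − s s*) s̃`
equals `T² − |s̃*s|²` and is strictly positive (here `ρ_E = T + σ²` and
`E[X*X]/N = s s* + σ²·I`). -/
theorem stmt9 (T : ℕ) (hT : 1 ≤ T) (σsq : ℝ)
    (s stil : Fin T → ℂ)
    (hs : ∀ k, ‖s k‖ = 1)
    (hstil : ∀ k, ‖stil k‖ = 1)
    (hlast : stil ⟨T - 1, by omega⟩ = s ⟨T - 1, by omega⟩)
    (hne : stil ≠ s) :
    star stil ⬝ᵥ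
        ((((T : ℝ) + σsq : ℝ) • (1 : Matrix (Fin T) (Fin T) ℂ)
            - (vecMulVec s (star s) + (σsq : ℂ) • (1 : Matrix (Fin T) (Fin T) ℂ)))
          *ᵥ stil)
      = ((T : ℝ) ^ 2 - ‖∑ k, (starRingEnd ℂ) (stil k) * s k‖ ^ 2 : ℝ)
    ∧ 0 < (T : ℝ) ^ 2 - ‖∑ k, (starRingEnd ℂ) (stil k) * s k‖ ^ 2 := by
  set L : Fin T := ⟨T - 1, by omega⟩
  set t : Fin T → ℂ := fun k => (starRingEnd ℂ) (stil k) * s k with ht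
  have hquad : star stil ⬝ᵥ (vecMulVec s (star s) *ᵥ stil) = ((‖∑ k, t k‖ ^ 2 : ℝ) : ℂ) :=
    star_dotProduct_vecMulVec_mulVec s stil
  have hunit := star_dotProduct_self_of_norm_eq_one hstil
  rw [Fintype.card_fin] at hunit
  refine ⟨?_, sub_pos.2 ?_⟩
  · rw [sub_mulVec, add_mulVec, smul_mulVec, smul_mulVec, one_mulVec, dotProduct_sub,
      dotProduct_add, dotProduct_smul, dotProduct_smul, hquad, hunit]
    simp only [Complex.real_smul, smul_eq_mul]
    push_cast
    ring
  obtain ⟨j, hj⟩ := Function.ne_iff.1 hne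
  -- `t L = ‖stil L‖² = 1 = ‖stil j‖²`, so `t j = t L` would let us cancel `conj (stil j)`.
  have htj : t j ≠ t L := by
    intro h
    have hcancel : (starRingEnd ℂ) (stil j) * s j = (starRingEnd ℂ) (stil j) * stil j := by
      simpa only [ht, ← hlast, Complex.conj_mul', hstil] using h
    exact hj (mul_left_cancel₀ (by simp [← norm_ne_zero_iff, hstil]) hcancel).symm
  have hlt := norm_sum_lt_card_of_norm_le_one (fun k => by simp [ht, hs, hstil]) htj
  rw [Fintype.card_fin] at hlt
  exact pow_lt_pow_left₀ hlt (norm_nonneg _) two_ne_zero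
end
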